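/- Let K be a splitting field of the finite group G with char K ∤ |G|, K ⊆ K' a field extension, and V a finite-dimensional representation of G over K. Then V is irreducible if and only if V ⊗_K K' is irreducible as a representation of G over K'. -/

import Mathlib

/-!
Irreducibility descends along `K → K'` because `Submodule.baseChange` is injective for the
faithfully flat extension `K'`, and the base change of a `G`-stable subspace is `G`-stable.
Conversely, since `K` is a splitting field, `ρ(G)` spans `End_K V`, so a `G`-stable subspace `U`
of `K' ⊗ V` is stable under `f ⊗ 1` for every `f ∈ End_K V`. If `U ∋ u ≠ 0`, choose a coordinate
functional `φ` with `(φ ⊗ 1) u = c ≠ 0`; the rank-one maps `x ↦ φ x • v` then send `u` to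
`c • (1 ⊗ v)`, so `U` contains every `1 ⊗ v` and is everything.
-/

open TensorProduct

/-- The base change `V ⊗_K K'` of a representation of `G` on `V` over `K` to a field
extension `K'` of `K`. -/
noncomputable def repBaseChange {K K' G V : Type*} [Field K] [Field K'] [Algebra K K']
    [Monoid G] [AddCommGroup V] [Module K V] (ρ : Representation K G V) :
    Representation K' G (K' ⊗[K] V) where
  toFun g := LinearMap.baseChange K' (ρ g)
  map_one' := by
    simp only [map_one]
    exact LinearMap.baseChange_one _ _
  map_mul' g h := by
    simp only [map_mul]
    exact LinearMap.baseChange_mul (ρ g) (ρ h)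

namespace Submodule

theorem baseChange_mem_invtSubmodule {R A M : Type*} [CommSemiring R] [Semiring A] [Algebra R A]
    [AddCommMonoid M] [Module R M] {f : Module.End R M} {U : Submodule R M}
    (hU : U ∈ f.invtSubmodule) : U.baseChange A ∈ Module.End.invtSubmodule (f.baseChange A) := by
  rw [Module.End.mem_invtSubmodule]
  conv_lhs => rw [baseChange_eq_span]
  rw [span_le]
  rintro _ ⟨m, hm, rfl⟩
  exact tmul_mem_baseChange_of_mem _ (hU hm)

theorem baseChange_mem_invtSubmodule_of_mem_span {R A M : Type*} [CommSemiring R]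
    [CommSemiring A] [Algebra R A] [AddCommMonoid M] [Module R M] {S : Set (Module.End R M)}
    {U : Submodule A (A ⊗[R] M)} (hS : ∀ f ∈ S, U ∈ Module.End.invtSubmodule (f.baseChange A))
    {f : Module.End R M} (hf : f ∈ span R S) : U ∈ Module.End.invtSubmodule (f.baseChange A) :=
  span_le (p := ((U.compatibleMaps U).restrictScalars R).comap
    (LinearMap.baseChangeHom R A M M)).mpr hS hf

end Submodule

theorem Representation.span_range_eq_top_of_surjective {k G V : Type*} [CommSemiring k]
    [Monoid G] [AddCommMonoid V] [Module k V] {ρ : Representation k G V}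
    (h : Function.Surjective ρ.asAlgebraHom) : Submodule.span k (Set.range ρ) = ⊤ := by
  refine Submodule.eq_top_iff'.mpr fun f => ?_
  obtain ⟨x, rfl⟩ := h f
  rw [Representation.asAlgebraHom_def, MonoidAlgebra.lift_apply]
  exact Submodule.finsuppSum_mem _ _ _ _ fun g _ =>
    Submodule.smul_mem _ _ (Submodule.subset_span ⟨g, rfl⟩)

theorem Module.Basis.baseChange_coord_smulRight_apply {R S M ι : Type*} [CommSemiring R]
    [CommSemiring S] [Algebra R S] [AddCommMonoid M] [Module R M] (b : Module.Basis ι R M)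
    (i : ι) (v : M) (u : S ⊗[R] M) :
    ((b.coord i).smulRight v).baseChange S u = (b.baseChange S).repr u i • ((1 : S) ⊗ₜ[R] v) := by
  induction u using TensorProduct.induction_on with
  | zero => simp
  | tmul c w => simp [Module.Basis.baseChange_repr_tmul, smul_tmul', Algebra.smul_def]
  | add x y hx hy => simp [hx, hy, add_smul]

section Field

variable {K K' V : Type*} [Field K] [Field K'] [Algebra K K'] [AddCommGroup V] [Module K V]

theorem exists_baseChange_smulRight_apply_eq_smul {u : K' ⊗[K] V} (hu : u ≠ 0) :
    ∃ (φ : Module.Dual K V) (c : K'), c ≠ 0 ∧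
      ∀ v : V, ((φ.smulRight v).baseChange K') u = c • ((1 : K') ⊗ₜ[K] v) := by
  set b := Module.Basis.ofVectorSpace K V
  obtain ⟨i, hi⟩ := Finsupp.ne_iff.mp ((b.baseChange K').repr.map_ne_zero_iff.mpr hu)
  exact ⟨b.coord i, _, hi, fun v => b.baseChange_coord_smulRight_apply i v u⟩

theorem Submodule.eq_bot_or_eq_top_of_forall_baseChange_mem_invtSubmodule
    {U : Submodule K' (K' ⊗[K] V)}
    (hU : ∀ f : Module.End K V, U ∈ Module.End.invtSubmodule (f.baseChange K')) :
    U = ⊥ ∨ U = ⊤ := by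
  refine or_iff_not_imp_left.mpr fun hne => ?_
  obtain ⟨u, huU, hu⟩ := U.ne_bot_iff.mp hne
  obtain ⟨φ, c, hc, hφ⟩ := exists_baseChange_smulRight_apply_eq_smul hu
  have h_one_tmul : ∀ v : V, (1 : K') ⊗ₜ[K] v ∈ U := fun v => by
    simpa [hφ, hc] using U.smul_mem c⁻¹ (hU (φ.smulRight v) huU)
  rw [eq_top_iff, ← baseChange_top, baseChange_eq_span, span_le]
  rintro _ ⟨v, -, rfl⟩
  exact h_one_tmul v

end Field

theorem irreducible_iff_baseChange_irreducible_general
    {K K' G : Type*} [Field K] [Field K'] [Algebra K K'] [Group G]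
    (hsplit : ∀ (V₀ : Type) [AddCommGroup V₀] [Module K V₀] [FiniteDimensional K V₀]
      (ρ₀ : Representation K G V₀), Nontrivial V₀ →
      (∀ U : Submodule K V₀, (∀ (g : G), ∀ x ∈ U, ρ₀ g x ∈ U) → U = ⊥ ∨ U = ⊤) →
      Function.Surjective ρ₀.asAlgebraHom)
    {V : Type} [AddCommGroup V] [Module K V] [FiniteDimensional K V]
    (ρ : Representation K G V) :
    ((Nontrivial V ∧
        ∀ U : Submodule K V, (∀ (g : G), ∀ x ∈ U, ρ g x ∈ U) → U = ⊥ ∨ U = ⊤) ↔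
      (Nontrivial (K' ⊗[K] V) ∧
        ∀ U : Submodule K' (K' ⊗[K] V),
          (∀ (g : G), ∀ x ∈ U, repBaseChange ρ g x ∈ U) → U = ⊥ ∨ U = ⊤)) := by
  rw [Module.FaithfullyFlat.nontrivial_tensorProduct_iff_right]
  refine and_congr_right fun hV => ⟨fun hirr U hU => ?_, fun hirr U hU => ?_⟩
  · have hspan := Representation.span_range_eq_top_of_surjective (hsplit V ρ hV hirr)
    refine Submodule.eq_bot_or_eq_top_of_forall_baseChange_mem_invtSubmodule fun f =>
      Submodule.baseChange_mem_invtSubmodule_of_mem_span ?_ (hspan ▸ Submodule.mem_top)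
    rintro _ ⟨g, rfl⟩
    exact hU g
  · have := hirr (U.baseChange K') fun g => Submodule.baseChange_mem_invtSubmodule (hU g)
    rwa [← Submodule.baseChange_bot, ← Submodule.baseChange_top, Submodule.baseChange_inj,
      Submodule.baseChange_inj] at this

/-- For a splitting field `K` of `G` with `char K ∤ |G|`, a finite-dimensional
representation `V` over `K` is irreducible iff its base change `V ⊗_K K'` to any field
extension `K'` is irreducible. -/
theorem irreducible_iff_baseChange_irreducible
    {K K' G : Type*} [Field K] [Field K'] [Algebra K K'] [Group G] [Fintype G]
    (hchar : ¬ (ringChar K ∣ Fintype.card G))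
    (hsplit : ∀ (V₀ : Type) [AddCommGroup V₀] [Module K V₀] [FiniteDimensional K V₀]
      (ρ₀ : Representation K G V₀), Nontrivial V₀ →
      (∀ U : Submodule K V₀, (∀ (g : G), ∀ x ∈ U, ρ₀ g x ∈ U) → U = ⊥ ∨ U = ⊤) →
      Function.Surjective ρ₀.asAlgebraHom)
    {V : Type} [AddCommGroup V] [Module K V] [FiniteDimensional K V]
    (ρ : Representation K G V) :
    ((Nontrivial V ∧
        ∀ U : Submodule K V, (∀ (g : G), ∀ x ∈ U, ρ g x ∈ U) → U = ⊥ ∨ U = ⊤) ↔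
      (Nontrivial (K' ⊗[K] V) ∧
        ∀ U : Submodule K' (K' ⊗[K] V),
          (∀ (g : G), ∀ x ∈ U, repBaseChange ρ g x ∈ U) → U = ⊥ ∨ U = ⊤)) :=
  irreducible_iff_baseChange_irreducible_general hsplit ρ
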